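/- Let S be a set of monic Lie polynomials in Lie(X) ⊆ k⟨X⟩ and let f, g ∈ S with a composition ⟨f,g⟩_w (of inclusion or of intersection, defined via the relative bracketing). Then the difference between the Lie composition ⟨f,g⟩_w and the associative composition (f,g)_w lies in the span of elements a s b with s ∈ {f,g} and a s̄ b < w in the deg-lex order. -/

import Mathlib

open List

/-- The lexicographic order used by Shirshov: a word is *greater* than any of its
proper extensions (`w > w ++ t` for `t ≠ []`), and otherwise words are compared
letterwise by the order on the alphabet.  `LSLt u v` means `u < v`. -/
def LSLt {X : Type*} [LinearOrder X] : List X → List X → Prop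
  | _ :: _, [] => True
  | [], _ => False
  | a :: u, b :: v => a < b ∨ (a = b ∧ LSLt u v)

/-- `u ≤ v` in the Shirshov lexicographic order. -/
def LSLe {X : Type*} [LinearOrder X] (u v : List X) : Prop := u = v ∨ LSLt u v

/-- The degree-lexicographic order: compare first by length, then lexicographically. -/
def DegLt {X : Type*} [LinearOrder X] (u v : List X) : Prop :=
  u.length < v.length ∨ (u.length = v.length ∧ LSLt u v)

/-- `≤` in the degree-lexicographic order. -/
def DegLe {X : Type*} [LinearOrder X] (u v : List X) : Prop := u = v ∨ DegLt u v

/-- An associative Lyndon–Shirshov word: a nonempty word `u` such that `vw > wv`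
(lexicographically) for every factorization `u = vw` into nonempty parts. -/
def IsALSW {X : Type*} [LinearOrder X] (u : List X) : Prop :=
  u ≠ [] ∧ ∀ v w : List X, v ≠ [] → w ≠ [] → u = v ++ w → LSLt (w ++ v) (v ++ w)

/-- The underlying associative word of a non-associative word (binary bracketing). -/
def wordOf {X : Type*} : FreeMagma X → List X
  | .of x => [x]
  | .mul a b => wordOf a ++ wordOf b

/-- `w` is the longest proper suffix of `u` which is an ALSW. -/
def LongestALSWProperSuffix {X : Type*} [LinearOrder X] (u w : List X) : Prop :=
  IsALSW w ∧ (∃ v : List X, v ≠ [] ∧ u = v ++ w) ∧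
    ∀ w' : List X, IsALSW w' → (∃ v' : List X, v' ≠ [] ∧ u = v' ++ w') →
      w'.length ≤ w.length

/-- The standard (up-to-down) bracketing of an ALSW: `[x] = x` and
`[u] = [[v][w]]` where `w` is the longest proper ALSW suffix of `u`. -/
inductive IsStdBracketing {X : Type*} [LinearOrder X] : List X → FreeMagma X → Prop
  | of (x : X) : IsStdBracketing [x] (.of x)
  | mul {v w : List X} {tv tw : FreeMagma X} :
      IsALSW (v ++ w) → LongestALSWProperSuffix (v ++ w) w →
      IsStdBracketing v tv → IsStdBracketing w tw →
      IsStdBracketing (v ++ w) (tv * tw)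

/-- A non-associative Lyndon–Shirshov word, via Shirshov's conditions:
the underlying word is an ALSW, both halves are NLSWs, and the right factor of
the left half is `≤` the right half. -/
inductive IsNLSW {X : Type*} [LinearOrder X] : FreeMagma X → Prop
  | of (x : X) : IsNLSW (.of x)
  | mul {tv tw : FreeMagma X} :
      IsNLSW tv → IsNLSW tw → IsALSW (wordOf (tv * tw)) →
      (∀ t₁ t₂ : FreeMagma X, tv = t₁ * t₂ → LSLe (wordOf t₂) (wordOf tw)) →
      IsNLSW (tv * tw)

/-- The free associative algebra `k⟨X⟩`, realized as the monoid algebra of the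
free monoid on `X`. -/
abbrev FreeAssocAlg (k X : Type*) [Field k] := MonoidAlgebra k (FreeMonoid X)

/-- The monomial of `k⟨X⟩` corresponding to a word `u ∈ X*`. -/
noncomputable def monom (k : Type*) [Field k] {X : Type*} (u : List X) : FreeAssocAlg k X :=
  MonoidAlgebra.single (FreeMonoid.ofList u) 1

/-- The coefficient of the word `u` in `f ∈ k⟨X⟩`. -/
def coeffW {k X : Type*} [Field k] (f : FreeAssocAlg k X) (u : List X) : k :=
  f.coeff (FreeMonoid.ofList u)

/-- `u` is the leading word of `f` with respect to the deg-lex order. -/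
def IsLeadingWord {k X : Type*} [Field k] [LinearOrder X]
    (f : FreeAssocAlg k X) (u : List X) : Prop :=
  coeffW f u ≠ 0 ∧ ∀ w : List X, coeffW f w ≠ 0 → w = u ∨ DegLt w u

/-- `f` is monic: its leading coefficient is `1`. -/
def IsMonic {k X : Type*} [Field k] [LinearOrder X] (f : FreeAssocAlg k X) : Prop :=
  ∃ u : List X, IsLeadingWord f u ∧ coeffW f u = 1

/-- The generator `x ∈ X` inside `k⟨X⟩`. -/
noncomputable def gen (k : Type*) [Field k] {X : Type*} (x : X) : FreeAssocAlg k X :=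
  monom k [x]

attribute [local instance 100] LieRing.ofAssociativeRing

/-- The free Lie algebra `Lie(X)`: the Lie subalgebra of `k⟨X⟩` generated by `X`
under the commutator bracket. -/
noncomputable def LieX (k X : Type*) [Field k] : LieSubalgebra k (FreeAssocAlg k X) :=
  LieSubalgebra.lieSpan k _ (Set.range (gen k (X := X)))

/-- Evaluation of a non-associative word in `k⟨X⟩`, interpreting the binary
operation as the commutator `(ab) = ab - ba`. -/
noncomputable def evalC {k X : Type*} [Field k] : FreeMagma X → FreeAssocAlg k X
  | .of x => gen k x
  | .mul a b => evalC a * evalC b - evalC b * evalC a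

/-- `SubtreeAt s a d t`: `s` occurs as a (bracketed) subtree of `t`, with the word
`a` to its left and the word `d` to its right. -/
inductive SubtreeAt {X : Type*} : FreeMagma X → List X → List X → FreeMagma X → Prop
  | refl (t : FreeMagma X) : SubtreeAt t [] [] t
  | left {s : FreeMagma X} {a d : List X} {t₁ : FreeMagma X} (t₂ : FreeMagma X) :
      SubtreeAt s a d t₁ → SubtreeAt s a (d ++ wordOf t₂) (t₁ * t₂)
  | right {s : FreeMagma X} {a d : List X} {t₂ : FreeMagma X} (t₁ : FreeMagma X) :
      SubtreeAt s a d t₂ → SubtreeAt s (wordOf t₁ ++ a) d (t₁ * t₂)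

/-- `ReplaceAt s s' a d t t'`: `t'` is obtained from `t` by replacing the subtree
`s`, occurring at position `(a, d)`, by `s'`. -/
inductive ReplaceAt {X : Type*} (s s' : FreeMagma X) :
    List X → List X → FreeMagma X → FreeMagma X → Prop
  | refl : ReplaceAt s s' [] [] s s'
  | left {a d : List X} {t₁ t₁' : FreeMagma X} (t₂ : FreeMagma X) :
      ReplaceAt s s' a d t₁ t₁' → ReplaceAt s s' a (d ++ wordOf t₂) (t₁ * t₂) (t₁' * t₂)
  | right {a d : List X} {t₂ t₂' : FreeMagma X} (t₁ : FreeMagma X) :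
      ReplaceAt s s' a d t₂ t₂' →
      ReplaceAt s s' (wordOf t₁ ++ a) d (t₁ * t₂) (t₁ * t₂')

/-- The left-normed product `[[[t₀ t₁] t₂] ⋯ tₙ]`. -/
def leftComb {X : Type*} (t₀ : FreeMagma X) (ts : List (FreeMagma X)) : FreeMagma X :=
  ts.foldl (· * ·) t₀

/-- `cs` is the non-decreasing Lyndon factorization of `c`. -/
def LyndonFactorization {X : Type*} [LinearOrder X] (c : List X) (cs : List (List X)) : Prop :=
  c = cs.flatten ∧ (∀ w ∈ cs, IsALSW w) ∧ cs.Chain' LSLe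

/-- `EvalSub k f s a d t h`: evaluating the bracketing `t` in `k⟨X⟩` (via
commutators), except that its subtree `s` at position `(a, d)` is replaced by the
polynomial `f`, gives the value `h`. -/
inductive EvalSub (k : Type*) [Field k] {X : Type*} [LinearOrder X] (f : FreeAssocAlg k X) :
    FreeMagma X → List X → List X → FreeMagma X → FreeAssocAlg k X → Prop
  | refl (s : FreeMagma X) : EvalSub k f s [] [] s f
  | left {s : FreeMagma X} {a d : List X} {t₁ : FreeMagma X} {h : FreeAssocAlg k X}
      (t₂ : FreeMagma X) : EvalSub k f s a d t₁ h →
      EvalSub k f s a (d ++ wordOf t₂) (t₁ * t₂) (h * evalC t₂ - evalC t₂ * h)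
  | right {s : FreeMagma X} {a d : List X} {t₂ : FreeMagma X} {h : FreeAssocAlg k X}
      (t₁ : FreeMagma X) : EvalSub k f s a d t₂ h →
      EvalSub k f s (wordOf t₁ ++ a) d (t₁ * t₂) (evalC t₁ * h - h * evalC t₁)

/-- `IsNormalSWord f fbar a b h`: `h` is the normal `S`-word `[afb]_{f̄}`, i.e. the
result of taking the relative (Shirshov special) bracketing `[a f̄ b]_{f̄}` and
substituting the polynomial `f` for the subtree `[f̄]`. -/
def IsNormalSWord {k X : Type*} [Field k] [LinearOrder X]
    (f : FreeAssocAlg k X) (fbar a b : List X) (h : FreeAssocAlg k X) : Prop :=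
  ∃ (c d : List X) (t s tv t' : FreeMagma X) (cs : List (List X)) (tcs : List (FreeMagma X)),
    b = c ++ d ∧
    IsStdBracketing (a ++ fbar ++ b) t ∧
    SubtreeAt s a d t ∧ wordOf s = fbar ++ c ∧
    IsStdBracketing fbar tv ∧
    LyndonFactorization c cs ∧
    List.Forall₂ IsStdBracketing cs tcs ∧
    ReplaceAt s (leftComb tv tcs) a d t t' ∧
    EvalSub k f tv a (c ++ d) t' h

/-- The shape of a composition: inclusion or intersection, with context words. -/
inductive CompShape (X : Type*)
  | incl (a b : List X)
  | inter (a b : List X)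

/-- The associative composition `(f,g)_w` of two monic polynomials with leading
words `f̄ = fbar`, `ḡ = gbar`. -/
def IsAssComp {k X : Type*} [Field k] (f g : FreeAssocAlg k X) (fbar gbar w : List X) :
    CompShape X → FreeAssocAlg k X → Prop
  | CompShape.incl a b, p =>
      w = fbar ∧ w = a ++ gbar ++ b ∧ p = f - monom k a * g * monom k b
  | CompShape.inter a b, p =>
      w = fbar ++ b ∧ w = a ++ gbar ∧ w.length < fbar.length + gbar.length ∧
      p = f * monom k b - monom k a * g

/-- The Lie composition `⟨f,g⟩_w`, built from normal `S`-words via Shirshov's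
special bracketing. -/
def IsLieComp {k X : Type*} [Field k] [LinearOrder X]
    (f g : FreeAssocAlg k X) (fbar gbar w : List X) :
    CompShape X → FreeAssocAlg k X → Prop
  | CompShape.incl a b, p =>
      w = fbar ∧ w = a ++ gbar ++ b ∧
      ∃ h, IsNormalSWord g gbar a b h ∧ p = f - h
  | CompShape.inter a b, p =>
      w = fbar ++ b ∧ w = a ++ gbar ∧ w.length < fbar.length + gbar.length ∧
      ∃ h₁ h₂, IsNormalSWord f fbar [] b h₁ ∧ IsNormalSWord g gbar a [] h₂ ∧
        p = h₁ - h₂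

/-- `p` is trivial modulo `(S, w)` in the associative sense: `p = Σ αᵢ aᵢ sᵢ bᵢ`
with `aᵢ s̄ᵢ bᵢ < w` in the deg-lex order. -/
def TrivialModAss {k X : Type*} [Field k] [LinearOrder X]
    (S : Set (FreeAssocAlg k X)) (w : List X) (p : FreeAssocAlg k X) : Prop :=
  ∃ (n : ℕ) (α : Fin n → k) (s : Fin n → FreeAssocAlg k X) (a b sb : Fin n → List X),
    (∀ i, s i ∈ S ∧ IsLeadingWord (s i) (sb i) ∧ DegLt (a i ++ sb i ++ b i) w) ∧
    p = ∑ i, α i • (monom k (a i) * s i * monom k (b i))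

/-- `p` is trivial modulo `(S, w)` in the Lie sense: `p = Σ αᵢ [aᵢ sᵢ bᵢ]_{s̄ᵢ}`
with `aᵢ s̄ᵢ bᵢ < w`, where the summands are normal `S`-words. -/
def TrivialModLie {k X : Type*} [Field k] [LinearOrder X]
    (S : Set (FreeAssocAlg k X)) (w : List X) (p : FreeAssocAlg k X) : Prop :=
  ∃ (n : ℕ) (α : Fin n → k) (s : Fin n → FreeAssocAlg k X) (a b sb : Fin n → List X)
    (h : Fin n → FreeAssocAlg k X),
    (∀ i, s i ∈ S ∧ IsLeadingWord (s i) (sb i) ∧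
      IsNormalSWord (s i) (sb i) (a i) (b i) (h i) ∧ DegLt (a i ++ sb i ++ b i) w) ∧
    p = ∑ i, α i • h i

/-- `S` is a Gröbner–Shirshov basis in `Lie(X)`: every Lie composition of
elements of `S` is trivial modulo `(S, w)`. -/
def IsGSBLie {k X : Type*} [Field k] [LinearOrder X] (S : Set (FreeAssocAlg k X)) : Prop :=
  ∀ (f g : FreeAssocAlg k X) (fbar gbar w : List X) (sh : CompShape X)
    (p : FreeAssocAlg k X), f ∈ S → g ∈ S →
    IsLeadingWord f fbar → IsLeadingWord g gbar →
    IsLieComp f g fbar gbar w sh p → TrivialModLie S w p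

/-- `S` is a Gröbner–Shirshov basis in `k⟨X⟩`: every associative composition of
elements of `S` is trivial modulo `(S, w)`. -/
def IsGSBAss {k X : Type*} [Field k] [LinearOrder X] (S : Set (FreeAssocAlg k X)) : Prop :=
  ∀ (f g : FreeAssocAlg k X) (fbar gbar w : List X) (sh : CompShape X)
    (p : FreeAssocAlg k X), f ∈ S → g ∈ S →
    IsLeadingWord f fbar → IsLeadingWord g gbar →
    IsAssComp f g fbar gbar w sh p → TrivialModAss S w p

/-- `u` is `S`-reduced: it contains no subword which is the leading word of an
element of `S`. -/
def SReduced {k X : Type*} [Field k] [LinearOrder X]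
    (S : Set (FreeAssocAlg k X)) (u : List X) : Prop :=
  ¬ ∃ (s : FreeAssocAlg k X) (a b sb : List X),
      s ∈ S ∧ IsLeadingWord s sb ∧ u = a ++ sb ++ b

/-! The normal `S`-word `[a s b]_{s̄}` is `a s b` plus a combination of products `a' s b'`
with `a' s̄ b' < a s̄ b`; subtracting these expansions for the two sides gives the claim.
It arises from `s` by repeated commutators with evaluations of bracketed words, and every
node `[T₁ T₂]` of the bracketing involved has a larger word than the swapped `[T₂ T₁]`:
at the nodes of a standard bracketing this is the Lyndon–Shirshov property, and along the
left-normed spine `[[s̄ c₁] … cₙ]` it holds because every factor `cᵢ` of the non-decreasing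
Lyndon factorization of `c` lies below the Lyndon–Shirshov word `s̄ c` already at a
position inside `cᵢ`. Since deg-lex is a monomial order, in each commutator the product in
bracketing order carries the leading term and the swapped product lies strictly below it. -/

section WordOrder

variable {X : Type*} [LinearOrder X] {x y z u v w : List X}

theorem not_lslt_nil (v : List X) : ¬ LSLt [] v := by
  cases v <;> simp [LSLt]

theorem LSLt.trans : ∀ {x y z : List X}, LSLt x y → LSLt y z → LSLt x z
  | [], _, _, h, _ => absurd h (not_lslt_nil _)
  | _ :: _, [], _, _, h => absurd h (not_lslt_nil _)
  | _ :: _, _ :: _, [], _, _ => True.intro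
  | _ :: _, _ :: _, _ :: _, h₁, h₂ => by
      rcases h₁ with hab | ⟨rfl, h₁⟩ <;> rcases h₂ with hbc | ⟨rfl, h₂⟩
      · exact Or.inl (hab.trans hbc)
      · exact Or.inl hab
      · exact Or.inl hbc
      · exact Or.inr ⟨rfl, h₁.trans h₂⟩

theorem LSLt.append_left : ∀ (P : List X), LSLt x y → LSLt (P ++ x) (P ++ y)
  | [], h => h
  | _ :: P, h => Or.inr ⟨rfl, LSLt.append_left P h⟩

/-- `x` is below `y` at the first position where they differ, and that position lies in
both words. Unlike `LSLt`, this survives appending arbitrary words to both sides. -/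
inductive StrongLt : List X → List X → Prop
  | head {a b : X} (u v : List X) : a < b → StrongLt (a :: u) (b :: v)
  | cons (a : X) {u v : List X} : StrongLt u v → StrongLt (a :: u) (a :: v)

theorem StrongLt.lslt (h : StrongLt x y) : LSLt x y := by
  induction h with
  | head _ _ hab => exact Or.inl hab
  | cons _ _ ih => exact Or.inr ⟨rfl, ih⟩

theorem StrongLt.irrefl : ∀ x : List X, ¬ StrongLt x x
  | [], h => nomatch h
  | a :: x, h => by
      cases h with
      | head _ _ h => exact lt_irrefl a h
      | cons _ h => exact StrongLt.irrefl x h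

theorem StrongLt.trans (h₁ : StrongLt x y) (h₂ : StrongLt y z) : StrongLt x z := by
  induction h₁ generalizing z with
  | head _ _ hab =>
      cases h₂ with
      | head _ _ hbc => exact .head _ _ (hab.trans hbc)
      | cons _ _ => exact .head _ _ hab
  | cons a _ ih =>
      cases h₂ with
      | head _ _ hbc => exact .head _ _ hbc
      | cons _ h₂ => exact .cons a (ih h₂)

theorem StrongLt.append_append (h : StrongLt x y) (γ δ : List X) :
    StrongLt (x ++ γ) (y ++ δ) := by
  induction h with
  | head _ _ hab => exact .head _ _ hab
  | cons a _ ih => exact .cons a ih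

theorem StrongLt.of_append_right : ∀ {x P Q : List X},
    StrongLt x (P ++ Q) → x.length ≤ P.length → StrongLt x P
  | [], _, _, h, _ => nomatch h
  | _ :: _, [], _, _, hl => by simp at hl
  | _ :: _, _ :: _, _, h, hl => by
      cases h with
      | head _ _ hab => exact .head _ _ hab
      | cons _ h => exact .cons _ (h.of_append_right (by simpa using hl))

theorem StrongLt.append_left_cases : ∀ {x γ W : List X}, StrongLt (x ++ γ) W →
    StrongLt x W ∨ ∃ W', W = x ++ W' ∧ StrongLt γ W'
  | [], _, W, h => Or.inr ⟨W, rfl, h⟩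
  | a :: x, γ, _, h => by
      cases h with
      | head _ _ hab => exact Or.inl (.head _ _ hab)
      | cons _ h =>
          obtain h | ⟨W', hW, hγ⟩ := StrongLt.append_left_cases (x := x) (γ := γ) h
          · exact Or.inl (.cons a h)
          · exact Or.inr ⟨W', by rw [hW, List.cons_append], hγ⟩

theorem LSLt.strongLt_of_length_eq : ∀ {x y : List X}, LSLt x y → x.length = y.length →
    StrongLt x y
  | [], _, h, _ => absurd h (not_lslt_nil _)
  | _ :: _, [], _, hl => by simp at hl
  | a :: _, _ :: _, h, hl => by
      rcases h with hab | ⟨rfl, h⟩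
      · exact .head _ _ hab
      · exact .cons a (h.strongLt_of_length_eq (by simpa using hl))

theorem LSLt.strongLt_or_eq_append : ∀ {x y : List X}, LSLt x y →
    StrongLt x y ∨ ∃ t, x = y ++ t
  | [], _, h => absurd h (not_lslt_nil _)
  | a :: u, [], _ => Or.inr ⟨a :: u, rfl⟩
  | a :: _, _ :: _, h => by
      rcases h with hab | ⟨rfl, h⟩
      · exact Or.inl (.head _ _ hab)
      · rcases h.strongLt_or_eq_append with h | ⟨t, rfl⟩
        · exact Or.inl (.cons a h)
        · exact Or.inr ⟨t, rfl⟩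

theorem LSLe.trans_strongLt (h₁ : LSLe x y) (h₂ : StrongLt y z) : StrongLt x z := by
  rcases h₁ with rfl | h₁
  · exact h₂
  · rcases h₁.strongLt_or_eq_append with h₁ | ⟨t, rfl⟩
    · exact h₁.trans h₂
    · simpa using h₂.append_append t []

theorem IsALSW.strongLt_of_suffix (hu : IsALSW (v ++ w)) (hv : v ≠ []) (hw : w ≠ []) :
    StrongLt w (v ++ w) := by
  have hswap : StrongLt (w ++ v) (v ++ w) :=
    (hu.2 v w hv hw rfl).strongLt_of_length_eq (by simp [Nat.add_comm])
  rcases hswap.append_left_cases with h | ⟨W, hW, hvW⟩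
  · exact h
  · exfalso
    have hlen : W.length = v.length := by
      have := congrArg List.length hW
      simp only [List.length_append] at this
      omega
    have hWne : W ≠ [] := by
      rintro rfl
      exact hv (List.length_eq_zero_iff.1 hlen.symm)
    -- the Lyndon–Shirshov property for the factorization `v ++ w = w ++ W` forces `W < v`
    have h₂ : StrongLt (W ++ w) (v ++ w) := by
      rw [hW]
      exact (hu.2 w W hw hWne hW).strongLt_of_length_eq (by simp [Nat.add_comm])
    rcases h₂.append_left_cases with h₃ | ⟨V, hV, hwV⟩
    · exact StrongLt.irrefl v (hvW.trans (h₃.of_append_right hlen.le))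
    · obtain ⟨rfl, rfl⟩ := List.append_inj hV hlen.symm
      exact StrongLt.irrefl _ hwV

theorem strongLt_of_isChain_lsle {Q : List X} (hQ : Q ≠ []) {cs : List (List X)}
    (hne : ∀ c ∈ cs, c ≠ []) (hchain : cs.IsChain LSLe) (hY : IsALSW (Q ++ cs.flatten)) :
    ∀ c ∈ cs, StrongLt c (Q ++ cs.flatten) := by
  induction cs generalizing Q with
  | nil => simp
  | cons c₀ rest ih =>
      have hrest : ∀ c ∈ rest, StrongLt c (Q ++ (c₀ :: rest).flatten) := by
        simpa using ih (Q := Q ++ c₀) (by simp [hQ]) (fun c hc => hne c (by simp [hc]))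
          hchain.tail (by simpa using hY)
      intro c hc
      rcases List.mem_cons.1 hc with rfl | hc
      · cases rest with
        | nil => simpa using hY.strongLt_of_suffix hQ (by simpa using hne c (by simp))
        | cons c₁ _ =>
            exact (List.isChain_cons_cons.1 hchain).1.trans_strongLt (hrest c₁ (by simp))
      · exact hrest c hc

theorem StrongLt.degLt (h : StrongLt x y) (hlen : x.length = y.length) : DegLt x y :=
  Or.inr ⟨hlen, h.lslt⟩

theorem DegLt.trans (h₁ : DegLt x y) (h₂ : DegLt y z) : DegLt x z := by
  rcases h₁ with h₁ | ⟨e₁, h₁⟩ <;> rcases h₂ with h₂ | ⟨e₂, h₂⟩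
  · exact Or.inl (h₁.trans h₂)
  · exact Or.inl (e₂ ▸ h₁)
  · exact Or.inl (e₁ ▸ h₂)
  · exact Or.inr ⟨e₁.trans e₂, h₁.trans h₂⟩

theorem DegLt.append_right (h : DegLt x y) (z : List X) : DegLt (x ++ z) (y ++ z) := by
  rcases h with h | ⟨hlen, h⟩
  · left
    simpa using h
  · exact ((h.strongLt_of_length_eq hlen).append_append z z).degLt (by simp [hlen])

theorem DegLt.append_left (h : DegLt x y) (z : List X) : DegLt (z ++ x) (z ++ y) := by
  rcases h with h | ⟨hlen, h⟩
  · left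
    simpa using h
  · exact Or.inr ⟨by simp [hlen], h.append_left z⟩

theorem DegLe.trans_degLt (h₁ : DegLe x y) (h₂ : DegLt y z) : DegLt x z := by
  rcases h₁ with rfl | h₁
  exacts [h₂, h₁.trans h₂]

theorem DegLt.append_degLe (h : DegLt x y) (h' : DegLe u v) : DegLt (x ++ u) (y ++ v) := by
  rcases h' with rfl | h'
  exacts [h.append_right u, (h.append_right u).trans (h'.append_left y)]

theorem DegLe.append_degLt (h : DegLe x y) (h' : DegLt u v) : DegLt (x ++ u) (y ++ v) := by
  rcases h with rfl | h
  exacts [h'.append_left x, (h.append_right u).trans (h'.append_left y)]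

theorem DegLe.append (h : DegLe x y) (h' : DegLe u v) : DegLe (x ++ u) (y ++ v) := by
  rcases h with rfl | h
  · rcases h' with rfl | h'
    exacts [Or.inl rfl, Or.inr (h'.append_left x)]
  · exact Or.inr (h.append_degLe h')

end WordOrder

section Trees

variable {X : Type*}

@[simp]
theorem wordOf_mul (t₁ t₂ : FreeMagma X) :
    wordOf (t₁ * t₂) = wordOf t₁ ++ wordOf t₂ := rfl

theorem ReplaceAt.wordOf_eq {s s' t t' : FreeMagma X} {a d : List X}
    (hr : ReplaceAt s s' a d t t') (hw : wordOf s' = wordOf s) : wordOf t' = wordOf t := by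
  induction hr with
  | refl => exact hw
  | left _ _ ih => simp [ih]
  | right _ _ ih => simp [ih]

@[simp]
theorem leftComb_nil (t₀ : FreeMagma X) : leftComb t₀ [] = t₀ := rfl

@[simp]
theorem leftComb_cons (t₀ t : FreeMagma X) (ts : List (FreeMagma X)) :
    leftComb t₀ (t :: ts) = leftComb (t₀ * t) ts := rfl

end Trees

section Bracketings

variable {X : Type*} [LinearOrder X] {u : List X}

theorem IsStdBracketing.wordOf_eq {t : FreeMagma X} (h : IsStdBracketing u t) :
    wordOf t = u := by
  induction h with
  | of x => rfl
  | mul _ _ _ _ ih₁ ih₂ => rw [wordOf_mul, ih₁, ih₂]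

theorem IsStdBracketing.isALSW {t : FreeMagma X} (h : IsStdBracketing u t) : IsALSW u := by
  cases h with
  | of x =>
      refine ⟨List.cons_ne_nil x [], fun v w hv hw hvw => ?_⟩
      have := congrArg List.length hvw
      simp only [List.length_cons, List.length_nil, List.length_append] at this
      have := List.length_pos_iff.2 hv
      have := List.length_pos_iff.2 hw
      omega
  | mul halsw _ _ _ => exact halsw

theorem SubtreeAt.isALSW_wordOf {s t : FreeMagma X} {a d : List X} (hs : SubtreeAt s a d t)
    (ht : IsStdBracketing u t) : IsALSW (wordOf s) := by
  induction hs generalizing u with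
  | refl => exact ht.wordOf_eq ▸ ht.isALSW
  | left _ _ ih => cases ht with | mul _ _ h₁ _ => exact ih h₁
  | right _ _ ih => cases ht with | mul _ _ _ h₂ => exact ih h₂

inductive SwapDecreasing : FreeMagma X → Prop
  | of (x : X) : SwapDecreasing (.of x)
  | mul {t₁ t₂ : FreeMagma X} : SwapDecreasing t₁ → SwapDecreasing t₂ →
      DegLt (wordOf t₂ ++ wordOf t₁) (wordOf t₁ ++ wordOf t₂) →
      SwapDecreasing (t₁ * t₂)

theorem IsStdBracketing.swapDecreasing {t : FreeMagma X} (h : IsStdBracketing u t) :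
    SwapDecreasing t := by
  induction h with
  | of x => exact .of x
  | mul halsw _ htv htw ihv ihw =>
      refine .mul ihv ihw ?_
      rw [htv.wordOf_eq, htw.wordOf_eq]
      exact Or.inr ⟨by simp [Nat.add_comm], halsw.2 _ _ htv.isALSW.1 htw.isALSW.1 rfl⟩

theorem ReplaceAt.swapDecreasing {s s' t t' : FreeMagma X} {a d : List X}
    (hr : ReplaceAt s s' a d t t') (hw : wordOf s' = wordOf s) (ht : SwapDecreasing t)
    (hs' : SwapDecreasing s') : SwapDecreasing t' := by
  induction hr with
  | refl => exact hs'
  | left _ hr ih =>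
      cases ht with
      | mul ht₁ ht₂ hlt => exact .mul (ih ht₁) ht₂ (by rwa [hr.wordOf_eq hw])
  | right _ hr ih =>
      cases ht with
      | mul ht₁ ht₂ hlt => exact .mul ht₁ (ih ht₂) (by rwa [hr.wordOf_eq hw])

theorem wordOf_leftComb {cs : List (List X)} {ts : List (FreeMagma X)}
    (h : List.Forall₂ IsStdBracketing cs ts) (t₀ : FreeMagma X) :
    wordOf (leftComb t₀ ts) = wordOf t₀ ++ cs.flatten := by
  induction h generalizing t₀ with
  | nil => simp
  | cons hc _ ih => simp [ih, hc.wordOf_eq]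

theorem swapDecreasing_leftComb {cs : List (List X)} {ts : List (FreeMagma X)}
    (h : List.Forall₂ IsStdBracketing cs ts) {t₀ : FreeMagma X} (h₀ : SwapDecreasing t₀)
    (hlt : ∀ c ∈ cs, StrongLt c (wordOf t₀ ++ cs.flatten)) :
    SwapDecreasing (leftComb t₀ ts) := by
  induction h generalizing t₀ with
  | nil => exact h₀
  | @cons c t cs ts hc _ ih =>
      have hct : StrongLt c (wordOf t₀ ++ c) := by
        have h := hlt c (by simp)
        rw [List.flatten_cons, ← List.append_assoc] at h
        exact h.of_append_right (by simp)
      refine ih (.mul h₀ hc.swapDecreasing ?_) fun c' hc' => ?_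
      · rw [hc.wordOf_eq]
        simpa using (hct.append_append (wordOf t₀) []).degLt (by simp [Nat.add_comm])
      · simpa [hc.wordOf_eq] using hlt c' (by simp [hc'])

end Bracketings

section Algebra

variable {k X : Type*} [Field k]

@[simp]
theorem monom_nil : monom k ([] : List X) = 1 := rfl

theorem monom_append (u v : List X) : monom k (u ++ v) = monom k u * monom k v := by
  simp only [monom, MonoidAlgebra.single_mul_single, mul_one]
  rfl

theorem evalC_mul (t₁ t₂ : FreeMagma X) :
    evalC (k := k) (t₁ * t₂) = evalC t₁ * evalC t₂ - evalC t₂ * evalC t₁ := rfl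

noncomputable def spanMultiples (f : FreeAssocAlg k X) (fbar : List X) (R : List X → Prop) :
    Submodule k (FreeAssocAlg k X) :=
  Submodule.span k {p | ∃ u v, R (u ++ fbar ++ v) ∧ p = monom k u * f * monom k v}

variable {f x y : FreeAssocAlg k X} {fbar u v w : List X} {R R' T : List X → Prop}

theorem monom_mul_mul_monom_mem (h : R (u ++ fbar ++ v)) :
    monom k u * f * monom k v ∈ spanMultiples f fbar R :=
  Submodule.subset_span ⟨u, v, h, rfl⟩

theorem monom_mem_spanMultiples_one (h : R w) :
    monom k w ∈ spanMultiples (1 : FreeAssocAlg k X) [] R := by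
  simpa using monom_mul_mul_monom_mem (k := k) (f := 1) (u := []) (v := w) (R := R) (by simpa)

theorem spanMultiples_mono (h : ∀ x, R x → R' x) :
    spanMultiples f fbar R ≤ spanMultiples f fbar R' :=
  Submodule.span_mono fun _ ⟨u, v, hR, hp⟩ => ⟨u, v, h _ hR, hp⟩

theorem mul_mem_spanMultiples_right (hx : x ∈ spanMultiples f fbar R)
    (hy : y ∈ spanMultiples 1 [] R') (hT : ∀ a b, R a → R' b → T (a ++ b)) :
    x * y ∈ spanMultiples f fbar T := by
  have hxy := Submodule.mul_mem_mul hx hy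
  rw [spanMultiples, spanMultiples, Submodule.span_mul_span] at hxy
  refine Submodule.span_le.2 ?_ hxy
  rintro _ ⟨_, ⟨u, v, hu, rfl⟩, _, ⟨u', v', hv, rfl⟩, rfl⟩
  simpa [monom_append, mul_assoc] using monom_mul_mul_monom_mem (k := k) (f := f)
    (u := u) (v := v ++ u' ++ v') (R := T) (by simpa using hT _ _ hu hv)

theorem mul_mem_spanMultiples_left (hy : y ∈ spanMultiples 1 [] R')
    (hx : x ∈ spanMultiples f fbar R) (hT : ∀ a b, R' a → R b → T (a ++ b)) :
    y * x ∈ spanMultiples f fbar T := by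
  have hyx := Submodule.mul_mem_mul hy hx
  rw [spanMultiples, spanMultiples, Submodule.span_mul_span] at hyx
  refine Submodule.span_le.2 ?_ hyx
  rintro _ ⟨_, ⟨u', v', hv, rfl⟩, _, ⟨u, v, hu, rfl⟩, rfl⟩
  simpa [monom_append, mul_assoc] using monom_mul_mul_monom_mem (k := k) (f := f)
    (u := u' ++ v' ++ u) (v := v) (R := T) (by simpa using hT _ _ hv hu)

end Algebra

section LeadingTerms

variable {k X : Type*} [Field k] [LinearOrder X] {f h e : FreeAssocAlg k X}
  {fbar A D w : List X}

theorem mem_spanMultiples_degLe_of_sub_mem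
    (hh : h - monom k A * f * monom k D ∈ spanMultiples f fbar (DegLt · (A ++ fbar ++ D))) :
    h ∈ spanMultiples f fbar (DegLe · (A ++ fbar ++ D)) :=
  (Submodule.sub_mem_iff_left _ (monom_mul_mul_monom_mem (Or.inl rfl))).1
    (spanMultiples_mono (fun _ => Or.inr) hh)

theorem mem_spanMultiples_one_degLe_of_sub_mem
    (he : e - monom k w ∈ spanMultiples 1 [] (DegLt · w)) :
    e ∈ spanMultiples 1 [] (DegLe · w) :=
  (Submodule.sub_mem_iff_left _ (monom_mem_spanMultiples_one (Or.inl rfl))).1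
    (spanMultiples_mono (fun _ => Or.inr) he)

theorem commutator_sub_mem_spanMultiples_left
    (hh : h - monom k A * f * monom k D ∈ spanMultiples f fbar (DegLt · (A ++ fbar ++ D)))
    (he : e - monom k w ∈ spanMultiples 1 [] (DegLt · w))
    (hlt : DegLt (w ++ (A ++ fbar ++ D)) (A ++ fbar ++ D ++ w)) :
    (h * e - e * h) - monom k A * f * monom k (D ++ w) ∈
      spanMultiples f fbar (DegLt · (A ++ fbar ++ D ++ w)) := by
  have hlead : h * e - monom k A * f * monom k (D ++ w) ∈
      spanMultiples f fbar (DegLt · (A ++ fbar ++ D ++ w)) := by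
    rw [show h * e - monom k A * f * monom k (D ++ w) = (h - monom k A * f * monom k D) * e +
        monom k A * f * monom k D * (e - monom k w) by rw [monom_append]; noncomm_ring]
    exact add_mem
      (mul_mem_spanMultiples_right hh (mem_spanMultiples_one_degLe_of_sub_mem he)
        fun _ _ => DegLt.append_degLe)
      (mul_mem_spanMultiples_right (monom_mul_mul_monom_mem (Or.inl rfl)) he
        fun _ _ => DegLe.append_degLt)
  have hswap : e * h ∈ spanMultiples f fbar (DegLt · (A ++ fbar ++ D ++ w)) :=
    mul_mem_spanMultiples_left (mem_spanMultiples_one_degLe_of_sub_mem he)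
      (mem_spanMultiples_degLe_of_sub_mem hh) fun _ _ ha hb => (ha.append hb).trans_degLt hlt
  convert sub_mem hlead hswap using 1
  abel

theorem commutator_sub_mem_spanMultiples_right
    (hh : h - monom k A * f * monom k D ∈ spanMultiples f fbar (DegLt · (A ++ fbar ++ D)))
    (he : e - monom k w ∈ spanMultiples 1 [] (DegLt · w))
    (hlt : DegLt (A ++ fbar ++ D ++ w) (w ++ (A ++ fbar ++ D))) :
    (e * h - h * e) - monom k (w ++ A) * f * monom k D ∈
      spanMultiples f fbar (DegLt · (w ++ (A ++ fbar ++ D))) := by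
  have hlead : e * h - monom k (w ++ A) * f * monom k D ∈
      spanMultiples f fbar (DegLt · (w ++ (A ++ fbar ++ D))) := by
    rw [show e * h - monom k (w ++ A) * f * monom k D = e * (h - monom k A * f * monom k D) +
        (e - monom k w) * (monom k A * f * monom k D) by rw [monom_append]; noncomm_ring]
    exact add_mem
      (mul_mem_spanMultiples_left (mem_spanMultiples_one_degLe_of_sub_mem he) hh
        fun _ _ => DegLe.append_degLt)
      (mul_mem_spanMultiples_left he (monom_mul_mul_monom_mem (Or.inl rfl))
        fun _ _ => DegLt.append_degLe)
  have hswap : h * e ∈ spanMultiples f fbar (DegLt · (w ++ (A ++ fbar ++ D))) :=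
    mul_mem_spanMultiples_right (mem_spanMultiples_degLe_of_sub_mem hh)
      (mem_spanMultiples_one_degLe_of_sub_mem he) fun _ _ ha hb => (ha.append hb).trans_degLt hlt
  convert sub_mem hlead hswap using 1
  abel

theorem SwapDecreasing.evalC_sub_monom_mem {t : FreeMagma X} (ht : SwapDecreasing t) :
    evalC t - monom k (wordOf t) ∈
      spanMultiples (1 : FreeAssocAlg k X) [] (DegLt · (wordOf t)) := by
  induction ht with
  | of x => simp [evalC, gen, wordOf]
  | @mul t₁ t₂ _ _ hlt ih₁ ih₂ =>
      simpa [evalC_mul, monom_append] using commutator_sub_mem_spanMultiples_left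
        (f := 1) (fbar := []) (A := []) (D := wordOf t₁) (by simpa using ih₁) ih₂
        (by simpa using hlt)

theorem EvalSub.wordOf_eq {s t : FreeMagma X} {a d : List X} (he : EvalSub k f s a d t h) :
    wordOf t = a ++ wordOf s ++ d := by
  induction he with
  | refl => simp
  | left _ _ ih => simp [ih]
  | right _ _ ih => simp [ih]

theorem EvalSub.sub_mem_spanMultiples {s t : FreeMagma X} {a d : List X}
    (he : EvalSub k f s a d t h) (ht : SwapDecreasing t) :
    h - monom k a * f * monom k d ∈
      spanMultiples f (wordOf s) (DegLt · (a ++ wordOf s ++ d)) := by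
  induction he with
  | refl => simp
  | left t₂ he ih =>
      cases ht with
      | mul ht₁ ht₂ hlt =>
          rw [he.wordOf_eq] at hlt
          simpa using commutator_sub_mem_spanMultiples_left (ih ht₁)
            ht₂.evalC_sub_monom_mem hlt
  | right t₁ he ih =>
      cases ht with
      | mul ht₁ ht₂ hlt =>
          rw [he.wordOf_eq] at hlt
          simpa using commutator_sub_mem_spanMultiples_right (ih ht₂)
            ht₁.evalC_sub_monom_mem hlt

end LeadingTerms

section Compositions

variable {k X : Type*} [Field k] [LinearOrder X]

theorem IsNormalSWord.sub_mem_spanMultiples {f h : FreeAssocAlg k X} {fbar a b : List X}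
    (hh : IsNormalSWord f fbar a b h) :
    h - monom k a * f * monom k b ∈ spanMultiples f fbar (DegLt · (a ++ fbar ++ b)) := by
  obtain ⟨c, d, t, s, tv, t', cs, tcs, rfl, ht, hsub, hws, htv, ⟨rfl, hcs, hchain⟩, htcs,
    hrep, hev⟩ := hh
  have hspine : SwapDecreasing (leftComb tv tcs) := by
    refine swapDecreasing_leftComb htcs htv.swapDecreasing ?_
    rw [htv.wordOf_eq]
    exact strongLt_of_isChain_lsle htv.isALSW.1 (fun c hc => (hcs c hc).1) hchain
      (hws ▸ hsub.isALSW_wordOf ht)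
  have ht' : SwapDecreasing t' := hrep.swapDecreasing
    (by rw [wordOf_leftComb htcs, htv.wordOf_eq, hws]) ht.swapDecreasing hspine
  simpa [htv.wordOf_eq] using hev.sub_mem_spanMultiples ht'

noncomputable def trivialSpan (S : Set (FreeAssocAlg k X)) (w : List X) :
    Submodule k (FreeAssocAlg k X) :=
  Submodule.span k {p | ∃ s ∈ S, ∃ sbar a b,
    IsLeadingWord s sbar ∧ DegLt (a ++ sbar ++ b) w ∧ p = monom k a * s * monom k b}

theorem spanMultiples_le_trivialSpan {S : Set (FreeAssocAlg k X)} {s : FreeAssocAlg k X}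
    {sbar w : List X} (hs : s ∈ S) (hlead : IsLeadingWord s sbar) :
    spanMultiples s sbar (DegLt · w) ≤ trivialSpan S w :=
  Submodule.span_mono fun _ ⟨a, b, hlt, hp⟩ => ⟨s, hs, sbar, a, b, hlead, hlt, hp⟩

theorem trivialModAss_of_mem_trivialSpan {S : Set (FreeAssocAlg k X)} {w : List X}
    {p : FreeAssocAlg k X} (hp : p ∈ trivialSpan S w) : TrivialModAss S w p := by
  obtain ⟨n, α, g, rfl⟩ := Submodule.mem_span_set'.1 hp
  choose s hs sbar a b hlead hlt hg using fun i => (g i).2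
  exact ⟨n, α, s, a, b, sbar, fun i => ⟨hs i, hlead i, hlt i⟩,
    Finset.sum_congr rfl fun i _ => by rw [hg i]⟩

end Compositions

theorem lie_comp_sub_ass_comp_trivial_general {k X : Type*} [Field k] [LinearOrder X]
    (f g : FreeAssocAlg k X)
    (fbar gbar w : List X)
    (hlf : IsLeadingWord f fbar) (hlg : IsLeadingWord g gbar)
    (sh : CompShape X) (p q : FreeAssocAlg k X)
    (hp : IsLieComp f g fbar gbar w sh p)
    (hq : IsAssComp f g fbar gbar w sh q) :
    TrivialModAss {f, g} w (p - q) := by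
  refine trivialModAss_of_mem_trivialSpan ?_
  cases sh with
  | incl a b =>
      obtain ⟨-, rfl, h, hh, rfl⟩ := hp
      obtain ⟨-, -, rfl⟩ := hq
      have hg := spanMultiples_le_trivialSpan (S := {f, g}) (by simp) hlg hh.sub_mem_spanMultiples
      convert neg_mem hg using 1
      abel
  | inter a b =>
      obtain ⟨rfl, hw, -, h₁, h₂, hh₁, hh₂, rfl⟩ := hp
      obtain ⟨-, -, -, rfl⟩ := hq
      have hf := spanMultiples_le_trivialSpan (S := {f, g}) (by simp) hlf
        hh₁.sub_mem_spanMultiples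
      have hg := spanMultiples_le_trivialSpan (S := {f, g}) (by simp) hlg
        hh₂.sub_mem_spanMultiples
      simp only [monom_nil, one_mul, mul_one, List.nil_append, List.append_nil, ← hw] at hf hg
      convert sub_mem hf hg using 1
      abel

/-- For monic Lie polynomials `f, g`, the difference between
the Lie composition `⟨f,g⟩_w` and the associative composition `(f,g)_w` (of the
same shape) is trivial modulo `({f,g}, w)` in the associative sense. -/
theorem lie_comp_sub_ass_comp_trivial {k X : Type*} [Field k] [LinearOrder X]
    (f g : FreeAssocAlg k X) (hf : f ∈ LieX k X) (hg : g ∈ LieX k X)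
    (hfm : IsMonic f) (hgm : IsMonic g)
    (fbar gbar w : List X)
    (hlf : IsLeadingWord f fbar) (hlg : IsLeadingWord g gbar)
    (sh : CompShape X) (p q : FreeAssocAlg k X)
    (hp : IsLieComp f g fbar gbar w sh p)
    (hq : IsAssComp f g fbar gbar w sh q) :
    TrivialModAss {f, g} w (p - q) :=
  lie_comp_sub_ass_comp_trivial_general f g fbar gbar w hlf hlg sh p q hp hq
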